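/- arXiv:2408.16066 — 2 statements merged into one kernel-verified Lean document; each statement's English description precedes it below -/
import Mathlib

section
/- If A ∈ M_n(ℂ) is Hermitian, then W_k(A) is the real interval [λ_n(A)+...+λ_{n-k+1}(A), λ_1(A)+...+λ_k(A)]. -/
open Matrix

/-- `P` is an orthogonal projection of rank `k`. -/
def IsProjOfRank {m : Type*} [Fintype m] [DecidableEq m]
    (P : Matrix m m ℂ) (k : ℕ) : Prop :=
  P * P = P ∧ Pᴴ = P ∧ P.rank = k

/-- The `k`-numerical range `W_k(A) = { tr (A P) : P an orthogonal projection of rank k }`. -/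
def WK {m : Type*} [Fintype m] [DecidableEq m] (k : ℕ) (A : Matrix m m ℂ) : Set ℂ :=
  {z | ∃ P : Matrix m m ℂ, IsProjOfRank P k ∧ z = (A * P).trace}

/-- The `k`-numerical radius `w_k(A) = max { |tr (A P)| : P a rank-k orthogonal projection }`. -/
noncomputable def wk {m : Type*} [Fintype m] [DecidableEq m] (k : ℕ) (A : Matrix m m ℂ) : ℝ :=
  sSup {r : ℝ | ∃ P : Matrix m m ℂ, IsProjOfRank P k ∧ r = ‖(A * P).trace‖}

/-- `A` and `B` are parallel with respect to the `k`-numerical radius. -/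
noncomputable def ParallelWk {m : Type*} [Fintype m] [DecidableEq m]
    (k : ℕ) (A B : Matrix m m ℂ) : Prop :=
  ∃ μ : ℂ, ‖μ‖ = 1 ∧ wk k (A + μ • B) = wk k A + wk k B

/-- Sum of the `k` largest eigenvalues of a Hermitian matrix (`0` if not Hermitian). -/
noncomputable def sumKLargest {m : Type*} [Fintype m] [DecidableEq m]
    (k : ℕ) (A : Matrix m m ℂ) : ℝ :=
  if h : A.IsHermitian then
    sSup {r : ℝ | ∃ s : Finset m, s.card = k ∧ r = ∑ i ∈ s, h.eigenvalues i}
  else 0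

/-- Sum of the `k` smallest eigenvalues of a Hermitian matrix (`0` if not Hermitian). -/
noncomputable def sumKSmallest {m : Type*} [Fintype m] [DecidableEq m]
    (k : ℕ) (A : Matrix m m ℂ) : ℝ :=
  if h : A.IsHermitian then
    sInf {r : ℝ | ∃ s : Finset m, s.card = k ∧ r = ∑ i ∈ s, h.eigenvalues i}
  else 0

/-!
Conjugating by the eigenvector unitary reduces `A` to `diagonal λ`, and
`tr (diagonal λ * P) = ∑ λᵢ Pᵢᵢ`. The diagonal of a rank-`k` orthogonal projection is a weight
vector `t ∈ [0, 1]ⁿ` with `∑ tᵢ = k`, and such a weighted sum lies between the extreme `k`-subset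
sums of `λ`: an optimal subset `s` is separated from its complement by a threshold `θ`, so
`∑ (λᵢ - θ) (1_s(i) - tᵢ) ≥ 0`. Conversely, exchanging `a ∈ s` for `b ∉ s` is done continuously by
the projections onto `span {eᵢ | i ∈ s \ {a}} ⊕ ℂ (√(1 - θ) e_a + √θ e_b)`, whose values sweep
the segment between the two subset sums, and a chain of exchanges joins any two `k`-subsets.
-/

open Finset
open scoped ComplexOrder

theorem Matrix.trace_eq_rank_of_isIdempotentElem {m K : Type*} [Fintype m] [DecidableEq m]
    [Field K] {P : Matrix m m K} (hP : IsIdempotentElem P) : P.trace = P.rank := by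
  have hP' : IsIdempotentElem P.mulVecLin := hP.map Matrix.toLinAlgEquiv'
  rw [Matrix.rank, ← (LinearMap.IsIdempotentElem.isProj_range _ hP').trace,
    ← Matrix.toLin'_apply', Matrix.trace_toLin'_eq]

theorem Matrix.trace_diagonal_mul {m R : Type*} [Fintype m] [DecidableEq m]
    [NonUnitalNonAssocSemiring R]
    (d : m → R) (Q : Matrix m m R) : (diagonal d * Q).trace = ∑ i, d i * Q i i := by
  simp [Matrix.trace, diagonal_mul]

def subsetSums {ι : Type*} (w : ι → ℝ) (k : ℕ) : Set ℝ :=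
  {r | ∃ s : Finset ι, s.card = k ∧ r = ∑ i ∈ s, w i}

section SubsetSums

variable {ι : Type*}

theorem exists_isGreatest_subsetSums [Fintype ι] (w : ι → ℝ) {k : ℕ} (hk : k ≤ Fintype.card ι) :
    ∃ s : Finset ι, #s = k ∧ IsGreatest (subsetSums w k) (∑ i ∈ s, w i) := by
  obtain ⟨s, hs, hmax⟩ := (powersetCard k (univ : Finset ι)).exists_max_image
    (fun s => ∑ i ∈ s, w i) (powersetCard_nonempty.2 (by simpa using hk))
  refine ⟨s, (mem_powersetCard.1 hs).2, ⟨s, (mem_powersetCard.1 hs).2, rfl⟩, ?_⟩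
  rintro _ ⟨s', hs', rfl⟩
  exact hmax s' (mem_powersetCard.2 ⟨subset_univ _, hs'⟩)

theorem exists_isLeast_subsetSums [Fintype ι] (w : ι → ℝ) {k : ℕ} (hk : k ≤ Fintype.card ι) :
    ∃ s : Finset ι, #s = k ∧ IsLeast (subsetSums w k) (∑ i ∈ s, w i) := by
  obtain ⟨s, hs, hmin⟩ := (powersetCard k (univ : Finset ι)).exists_min_image
    (fun s => ∑ i ∈ s, w i) (powersetCard_nonempty.2 (by simpa using hk))
  refine ⟨s, (mem_powersetCard.1 hs).2, ⟨s, (mem_powersetCard.1 hs).2, rfl⟩, ?_⟩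
  rintro _ ⟨s', hs', rfl⟩
  exact hmin s' (mem_powersetCard.2 ⟨subset_univ _, hs'⟩)

theorem sum_mul_le_sum_of_forall_le [Fintype ι] {w t : ι → ℝ} {s : Finset ι} {θ : ℝ}
    (hθs : ∀ i ∈ s, θ ≤ w i) (hθsc : ∀ i ∉ s, w i ≤ θ) (ht : ∀ i, t i ∈ Set.Icc (0 : ℝ) 1)
    (hts : ∑ i, t i = #s) : ∑ i, w i * t i ≤ ∑ i ∈ s, w i := by
  classical
  have hgap : ∑ i ∈ s, w i - ∑ i, w i * t i =
      ∑ i, (w i - θ) * ((if i ∈ s then 1 else 0) - t i) := by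
    simp only [mul_sub, sub_mul, sum_sub_distrib, mul_ite, mul_one, mul_zero, sum_ite_mem,
      univ_inter, ← mul_sum, hts, sum_const, nsmul_eq_mul]
    ring
  have hnonneg : 0 ≤ ∑ i, (w i - θ) * ((if i ∈ s then 1 else 0) - t i) :=
    sum_nonneg fun i _ => by
      by_cases hi : i ∈ s
      · rw [if_pos hi]
        exact mul_nonneg (sub_nonneg.2 (hθs i hi)) (sub_nonneg.2 (ht i).2)
      · rw [if_neg hi, zero_sub]
        exact mul_nonneg_of_nonpos_of_nonpos (sub_nonpos.2 (hθsc i hi)) (neg_nonpos.2 (ht i).1)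
  linarith

theorem sum_mul_le_of_isGreatest [Fintype ι] {w t : ι → ℝ} {k : ℕ} {s : Finset ι} (hk : 0 < k)
    (hs : #s = k) (hmax : IsGreatest (subsetSums w k) (∑ i ∈ s, w i))
    (ht : ∀ i, t i ∈ Set.Icc (0 : ℝ) 1) (hts : ∑ i, t i = k) :
    ∑ i, w i * t i ≤ ∑ i ∈ s, w i := by
  classical
  subst hs
  have hne : s.Nonempty := card_pos.1 hk
  refine sum_mul_le_sum_of_forall_le (θ := s.inf' hne w) (fun i hi => inf'_le w hi)
    (fun j hj => le_inf' hne w fun i hi => ?_) ht hts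
  have hj' : j ∉ s.erase i := fun h => hj (mem_of_mem_erase h)
  have hswap := hmax.2 ⟨insert j (s.erase i), by rw [card_insert_of_notMem hj',
    card_erase_add_one hi], rfl⟩
  rw [sum_insert hj', sum_erase_eq_sub hi] at hswap
  linarith

theorem sum_le_sum_mul_of_isLeast [Fintype ι] {w t : ι → ℝ} {k : ℕ} {s : Finset ι} (hk : 0 < k)
    (hs : #s = k) (hmin : IsLeast (subsetSums w k) (∑ i ∈ s, w i))
    (ht : ∀ i, t i ∈ Set.Icc (0 : ℝ) 1) (hts : ∑ i, t i = k) :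
    ∑ i ∈ s, w i ≤ ∑ i, w i * t i := by
  have hmax : IsGreatest (subsetSums (-w) k) (∑ i ∈ s, (-w) i) := by
    refine ⟨⟨s, hs, rfl⟩, ?_⟩
    rintro _ ⟨s', hs', rfl⟩
    simpa [sum_neg_distrib] using hmin.2 ⟨s', hs', rfl⟩
  simpa [sum_neg_distrib] using sum_mul_le_of_isGreatest hk hs hmax ht hts

theorem uIcc_subset_of_exchange [DecidableEq ι] {w : ι → ℝ} {R : Set ℝ} {k : ℕ}
    (hmem : ∀ s : Finset ι, #s = k → ∑ i ∈ s, w i ∈ R)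
    (hswap : ∀ (S : Finset ι) (a b : ι), a ∉ S → b ∉ S → a ≠ b → #S + 1 = k →
      Set.uIcc (∑ i ∈ insert a S, w i) (∑ i ∈ insert b S, w i) ⊆ R)
    {s s' : Finset ι} (hs : #s = k) (hs' : #s' = k) :
    Set.uIcc (∑ i ∈ s, w i) (∑ i ∈ s', w i) ⊆ R := by
  induction h : #(s \ s') generalizing s with
  | zero =>
    obtain rfl : s = s' := eq_of_subset_of_card_le
      (sdiff_eq_empty_iff_subset.1 (card_eq_zero.1 h)) (hs'.trans hs.symm).le
    simpa using hmem s hs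
  | succ d ih =>
    obtain ⟨a, ha⟩ := card_pos.1 (by rw [h]; exact d.succ_pos)
    obtain ⟨b, hb⟩ := card_pos.1 (by
      rw [← card_sdiff_comm (hs.trans hs'.symm), h]
      exact d.succ_pos)
    rw [mem_sdiff] at ha hb
    have hbS : b ∉ s.erase a := fun h' => hb.2 (mem_of_mem_erase h')
    have hS : #(s.erase a) + 1 = k := by rw [card_erase_add_one ha.1, hs]
    have hs₁ : #(insert b (s.erase a)) = k := by rw [card_insert_of_notMem hbS, hS]
    have hd : #(insert b (s.erase a) \ s') = d := by
      rw [show insert b (s.erase a) \ s' = (s \ s').erase a by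
        ext x
        by_cases hx : x = b <;> simp [hx, hb.1, and_assoc],
        card_erase_of_mem (mem_sdiff.2 ha), h, Nat.add_sub_cancel]
    have hfirst := hswap _ a b (notMem_erase a s) hbS (ne_of_mem_of_not_mem ha.1 hb.2) hS
    rw [insert_erase ha.1] at hfirst
    exact Set.uIcc_subset_uIcc_union_uIcc.trans (Set.union_subset hfirst (ih hs₁ hd))

end SubsetSums

section Projections

variable {m : Type*} [Fintype m] [DecidableEq m]

theorem isProjOfRank_iff_trace {P : Matrix m m ℂ} (h2 : P * P = P) (hH : Pᴴ = P) {k : ℕ} :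
    IsProjOfRank P k ↔ P.trace = k := by
  rw [IsProjOfRank, trace_eq_rank_of_isIdempotentElem h2, Nat.cast_inj]
  tauto

namespace IsProjOfRank

variable {P Q : Matrix m m ℂ} {k l : ℕ}

theorem trace_eq (hP : IsProjOfRank P k) : P.trace = k :=
  (isProjOfRank_iff_trace hP.1 hP.2.1).1 hP

theorem conj_unitary (hP : IsProjOfRank P k) {U : Matrix m m ℂ} (hU : U ∈ unitaryGroup m ℂ) :
    IsProjOfRank (U * P * star U) k := by
  have hUU : star U * U = 1 := hU.1
  refine (isProjOfRank_iff_trace ?_ ?_).2 ?_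
  · calc U * P * star U * (U * P * star U) = U * P * (star U * U) * P * star U := by noncomm_ring
      _ = U * P * star U := by rw [hUU, mul_one, mul_assoc U P P, hP.1]
  · rw [← star_eq_conjTranspose, star_mul, star_mul, star_star, star_eq_conjTranspose P, hP.2.1,
      mul_assoc]
  · rw [trace_mul_cycle, hUU, one_mul, hP.trace_eq]

theorem add (hP : IsProjOfRank P k) (hQ : IsProjOfRank Q l) (hPQ : P * Q = 0) :
    IsProjOfRank (P + Q) (k + l) := by
  have hQP : Q * P = 0 := by
    rw [← hP.2.1, ← hQ.2.1, ← conjTranspose_mul, hPQ, conjTranspose_zero]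
  refine (isProjOfRank_iff_trace ?_ ?_).2 ?_
  · rw [add_mul, mul_add, mul_add, hP.1, hQ.1, hPQ, hQP, add_zero, zero_add]
  · rw [conjTranspose_add, hP.2.1, hQ.2.1]
  · rw [trace_add, hP.trace_eq, hQ.trace_eq, Nat.cast_add]

theorem exists_diag_eq (hP : IsProjOfRank P k) :
    ∃ t : m → ℝ, (∀ i, t i ∈ Set.Icc (0 : ℝ) 1) ∧ ∑ i, t i = k ∧ ∀ i, P i i = t i := by
  have hPsd : P.PosSemidef := by
    simpa [hP.2.1, hP.1] using posSemidef_conjTranspose_mul_self P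
  have hPsd' : (1 - P).PosSemidef := by
    have h : (1 - P)ᴴ * (1 - P) = 1 - P := by
      rw [conjTranspose_sub, conjTranspose_one, hP.2.1, sub_mul, mul_sub, mul_sub, hP.1,
        mul_one, one_mul, mul_one, sub_self, sub_zero]
    exact h ▸ posSemidef_conjTranspose_mul_self (1 - P)
  have hdiag : ∀ i, P i i = (P i i).re := fun i =>
    Complex.ext rfl (Complex.nonneg_iff.1 hPsd.diag_nonneg).2.symm
  refine ⟨fun i => (P i i).re, fun i => ⟨?_, ?_⟩, ?_, hdiag⟩
  · exact (Complex.nonneg_iff.1 hPsd.diag_nonneg).1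
  · simpa using (Complex.nonneg_iff.1 (hPsd'.diag_nonneg (i := i))).1
  · have h : ((∑ i, (P i i).re : ℝ) : ℂ) = k := by
      rw [← hP.trace_eq, Complex.ofReal_sum]
      exact sum_congr rfl fun i _ => (hdiag i).symm
    exact_mod_cast h

end IsProjOfRank

theorem isProjOfRank_diagonal_indicator (S : Finset m) :
    IsProjOfRank (diagonal fun i => if i ∈ S then (1 : ℂ) else 0) #S := by
  refine (isProjOfRank_iff_trace ?_ ?_).2 ?_
  · rw [diagonal_mul_diagonal]
    congr 1
    ext i
    by_cases hi : i ∈ S <;> simp [hi]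
  · rw [diagonal_conjTranspose]
    congr 1
    ext i
    by_cases hi : i ∈ S <;> simp [hi]
  · simp [trace_diagonal]

theorem isProjOfRank_vecMulVec {v : m → ℂ} (hv : star v ⬝ᵥ v = 1) :
    IsProjOfRank (vecMulVec v (star v)) 1 := by
  refine (isProjOfRank_iff_trace ?_ ?_).2 ?_
  · rw [vecMulVec_mul_vecMulVec, hv, one_smul]
  · rw [conjTranspose_vecMulVec, star_star]
  · rw [trace_vecMulVec, dotProduct_comm, hv, Nat.cast_one]

theorem WK_unitary_conj (k : ℕ) (A : Matrix m m ℂ) {U : Matrix m m ℂ}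
    (hU : U ∈ unitaryGroup m ℂ) : WK k (U * A * star U) = WK k A := by
  have hUU : star U * U = 1 := hU.1
  ext z
  constructor
  · rintro ⟨P, hP, rfl⟩
    refine ⟨star U * P * U, by simpa using hP.conj_unitary (Unitary.star_mem hU), ?_⟩
    rw [show U * A * star U * P = U * (A * star U * P) by simp only [mul_assoc], trace_mul_comm]
    simp only [mul_assoc]
  · rintro ⟨P, hP, rfl⟩
    refine ⟨U * P * star U, hP.conj_unitary hU, ?_⟩
    rw [show U * A * star U * (U * P * star U) = U * (A * P) * star U by
      simp only [← mul_assoc, mul_assoc _ (star U) U, hUU, mul_one], trace_mul_cycle,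
      ← mul_assoc, hUU, one_mul]

theorem WK_eq_WK_diagonal_eigenvalues {A : Matrix m m ℂ} (hA : A.IsHermitian) (k : ℕ) :
    WK k A = WK k (diagonal fun i => (hA.eigenvalues i : ℂ)) := by
  conv_lhs => rw [hA.spectral_theorem, Unitary.conjStarAlgAut_apply]
  exact WK_unitary_conj k _ hA.eigenvectorUnitary.2

theorem mem_WK_diagonal_of_sum_sq_eq_one (w : m → ℝ) {S : Finset m} {u : m → ℝ}
    (hu : ∑ i, u i ^ 2 = 1) (huS : ∀ i ∈ S, u i = 0) :
    ((∑ i ∈ S, w i + ∑ i, w i * u i ^ 2 : ℝ) : ℂ) ∈ WK (#S + 1) (diagonal fun i => (w i : ℂ)) := by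
  set v : m → ℂ := fun i => u i
  have hv : star v = v := funext fun i => Complex.conj_ofReal _
  have hvv : star v ⬝ᵥ v = 1 := by
    rw [hv, dotProduct]
    simp only [v]
    exact_mod_cast (sum_congr rfl fun i _ => (sq (u i)).symm).trans hu
  refine ⟨_, (isProjOfRank_diagonal_indicator S).add (isProjOfRank_vecMulVec hvv) ?_, ?_⟩
  · ext i j
    by_cases hi : i ∈ S <;> simp [diagonal_mul, vecMulVec_apply, hi, v, huS]
  · rw [mul_add, trace_add, trace_diagonal_mul, trace_diagonal_mul]
    simp [vecMulVec_apply, hv, v, sq]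

theorem uIcc_subset_WK_diagonal (w : m → ℝ) {S : Finset m} {a b : m} (ha : a ∉ S) (hb : b ∉ S)
    (hab : a ≠ b) :
    Set.uIcc (∑ i ∈ insert a S, w i) (∑ i ∈ insert b S, w i) ⊆
      {r : ℝ | (r : ℂ) ∈ WK (#S + 1) (diagonal fun i => (w i : ℂ))} := by
  rw [sum_insert ha, sum_insert hb, ← segment_eq_uIcc, segment_eq_image]
  rintro _ ⟨θ, ⟨hθ0, hθ1⟩, rfl⟩
  set u : m → ℝ := fun i => if i = a then √(1 - θ) else if i = b then √θ else 0
  have hu0 : ∀ i, i ≠ a ∧ i ≠ b → u i = 0 := fun i hi => by simp [u, hi.1, hi.2]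
  have hsum : ∀ f : m → ℝ, ∑ i, f i * u i ^ 2 = (1 - θ) * f a + θ * f b := fun f => by
    rw [Fintype.sum_eq_add a b hab fun i hi => by simp [hu0 i hi]]
    simp [u, hab.symm, Real.sq_sqrt hθ0, Real.sq_sqrt (sub_nonneg.2 hθ1), mul_comm]
  have hmem := mem_WK_diagonal_of_sum_sq_eq_one w (u := u) (by simpa using hsum 1)
    fun i hi => hu0 i ⟨ne_of_mem_of_not_mem hi ha, ne_of_mem_of_not_mem hi hb⟩
  rw [hsum] at hmem
  rw [Set.mem_ofPred_eq]
  convert hmem using 2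
  simp only [smul_eq_mul]
  ring

theorem WK_diagonal_eq {w : m → ℝ} {k : ℕ} (hk : 0 < k) {smin smax : Finset m}
    (hsmin : #smin = k) (hmin : IsLeast (subsetSums w k) (∑ i ∈ smin, w i))
    (hsmax : #smax = k) (hmax : IsGreatest (subsetSums w k) (∑ i ∈ smax, w i)) :
    WK k (diagonal fun i => (w i : ℂ)) =
      (fun r : ℝ => (r : ℂ)) '' Set.Icc (∑ i ∈ smin, w i) (∑ i ∈ smax, w i) := by
  apply subset_antisymm
  · rintro _ ⟨Q, hQ, rfl⟩
    obtain ⟨t, ht, hts, hQt⟩ := hQ.exists_diag_eq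
    refine ⟨∑ i, w i * t i, ⟨sum_le_sum_mul_of_isLeast hk hsmin hmin ht hts,
      sum_mul_le_of_isGreatest hk hsmax hmax ht hts⟩, ?_⟩
    simp [trace_diagonal_mul, hQt]
  · rintro _ ⟨r, hr, rfl⟩
    refine uIcc_subset_of_exchange (R := {r : ℝ | (r : ℂ) ∈ WK k _})
      (fun s hs => ?_) (fun S a b ha hb hab hS => ?_) hsmin hsmax (Set.Icc_subset_uIcc hr)
    · exact ⟨_, hs ▸ isProjOfRank_diagonal_indicator s, by simp⟩
    · exact hS ▸ uIcc_subset_WK_diagonal w ha hb hab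

end Projections

/-- for Hermitian `A`, `W_k(A)` is the real interval
`[λ_n + ... + λ_{n-k+1}, λ_1 + ... + λ_k]`. -/
theorem stmt_1 (n k : ℕ) (hk : 1 ≤ k) (hkn : k ≤ n)
    (A : Matrix (Fin n) (Fin n) ℂ) (hA : A.IsHermitian) :
    WK k A = (fun r : ℝ => (r : ℂ)) '' Set.Icc (sumKSmallest k A) (sumKLargest k A) := by
  have hkn' : k ≤ Fintype.card (Fin n) := by simpa using hkn
  obtain ⟨smin, hsmin, hmin⟩ := exists_isLeast_subsetSums hA.eigenvalues hkn'
  obtain ⟨smax, hsmax, hmax⟩ := exists_isGreatest_subsetSums hA.eigenvalues hkn'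
  have hlo : sumKSmallest k A = ∑ i ∈ smin, hA.eigenvalues i := by
    rw [sumKSmallest, dif_pos hA]
    exact hmin.csInf_eq
  have hhi : sumKLargest k A = ∑ i ∈ smax, hA.eigenvalues i := by
    rw [sumKLargest, dif_pos hA]
    exact hmax.csSup_eq
  rw [hlo, hhi, WK_eq_WK_diagonal_eigenvalues hA]
  exact WK_diagonal_eq hk hsmin hmin hsmax hmax
end

section
/- Two matrices A, B ∈ M_n(ℂ) are parallel with respect to the k-numerical radius (i.e., w_k(A + μB) = w_k(A) + w_k(B) for some unimodular μ ∈ ℂ) if and only if there exists a rank-k orthogonal projection P with |tr(AP)| = w_k(A) and |tr(BP)| = w_k(B). -/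
open Matrix

/-! The rank-`k` orthogonal projections form a compact set: their entries are bounded by `1`,
and among Hermitian idempotents the rank is the trace, a continuous function. Hence `w_k(C)` is
attained for every `C`. If `w_k(A + μB) = w_k(A) + w_k(B)`, a projection `P` attaining
`w_k(A + μB)` satisfies `w_k(A) + w_k(B) = |tr(AP) + μ tr(BP)| ≤ |tr(AP)| + |tr(BP)|`, so it
attains both `w_k(A)` and `w_k(B)`. Conversely, if `P` attains both, a unimodular `μ` rotating
`tr(BP)` onto the direction of `tr(AP)` gives `|tr((A + μB)P)| = w_k(A) + w_k(B)`, and the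
reverse inequality is the triangle inequality. -/

namespace Matrix

variable {m : Type*} [Fintype m]

theorem trace_eq_rank_of_isIdempotentElem_s4 {K : Type*} [Field K] [DecidableEq m]
    {P : Matrix m m K} (hP : IsIdempotentElem P) : P.trace = P.rank := by
  have hP' : IsIdempotentElem (toLin' P) := hP.map (toLinAlgEquiv' (R := K) (n := m))
  rw [← trace_toLin'_eq, ((LinearMap.isProj_range_iff_isIdempotentElem _).mpr hP').trace]
  rfl

theorem re_apply_self_eq_sum_normSq {P : Matrix m m ℂ} (hP : IsStarProjection P) (j : m) :
    (P j j).re = ∑ i, Complex.normSq (P i j) := by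
  have hPP : star P * P = P := by rw [hP.isSelfAdjoint.star_eq, hP.isIdempotentElem.eq]
  conv_lhs => rw [← hPP]
  simp [mul_apply, star_apply, Complex.normSq_apply]

theorem norm_apply_le_one_of_isStarProjection [DecidableEq m] {P : Matrix m m ℂ}
    (hP : IsStarProjection P) (i j : m) : ‖P i j‖ ≤ 1 := by
  have hcol : Complex.normSq (P i j) ≤ (P j j).re := by
    rw [re_apply_self_eq_sum_normSq hP]
    exact Finset.single_le_sum (fun l _ => Complex.normSq_nonneg (P l j)) (Finset.mem_univ i)
  -- the diagonal entries of `1 - P` are nonnegative too, so `(P j j).re ≤ 1`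
  have hdiag : 0 ≤ ((1 - P) j j).re := by
    rw [re_apply_self_eq_sum_normSq hP.one_sub]
    exact Finset.sum_nonneg fun l _ => Complex.normSq_nonneg _
  simp only [sub_apply, one_apply_eq, Complex.sub_re, Complex.one_re] at hdiag
  rw [← sq_le_one_iff₀ (norm_nonneg _), Complex.sq_norm]
  linarith

end Matrix

section IsProjOfRank

variable {m : Type*} [Fintype m] [DecidableEq m] {k : ℕ}

theorem IsProjOfRank.isStarProjection {P : Matrix m m ℂ} (hP : IsProjOfRank P k) :
    IsStarProjection P :=
  ⟨hP.1, hP.2.1⟩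

theorem isProjOfRank_iff_isStarProjection_and_trace {P : Matrix m m ℂ} :
    IsProjOfRank P k ↔ IsStarProjection P ∧ P.trace = k := by
  refine ⟨fun hP => ⟨hP.isStarProjection, ?_⟩, fun ⟨hP, htr⟩ => ⟨hP.1, hP.2, ?_⟩⟩
  · rw [trace_eq_rank_of_isIdempotentElem_s4 hP.1, hP.2.2]
  · rwa [trace_eq_rank_of_isIdempotentElem_s4 hP.1, Nat.cast_inj] at htr

theorem isCompact_setOf_isProjOfRank (k : ℕ) :
    IsCompact {P : Matrix m m ℂ | IsProjOfRank P k} := by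
  have hclosed : IsClosed {P : Matrix m m ℂ | IsProjOfRank P k} := by
    simp only [isProjOfRank_iff_isStarProjection_and_trace, isStarProjection_iff']
    refine ((isClosed_eq (continuous_id.matrix_mul continuous_id) continuous_id).inter
      (isClosed_eq continuous_star continuous_id)).inter
      (isClosed_eq continuous_id.matrix_trace continuous_const)
  refine (isCompact_univ_pi fun _ => isCompact_univ_pi fun _ =>
    isCompact_closedBall (0 : ℂ) 1).of_isClosed_subset hclosed fun P hP => ?_
  simpa using fun i j => norm_apply_le_one_of_isStarProjection hP.isStarProjection i j

theorem exists_isProjOfRank (hk : k ≤ Fintype.card m) :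
    ∃ P : Matrix m m ℂ, IsProjOfRank P k := by
  obtain ⟨s, -, hs⟩ := Finset.exists_subset_card_eq (s := Finset.univ) hk
  refine ⟨diagonal fun i => if i ∈ s then 1 else 0,
    isProjOfRank_iff_isStarProjection_and_trace.mpr ⟨⟨?_, ?_⟩, ?_⟩⟩
  · rw [IsIdempotentElem, diagonal_mul_diagonal]
    congr 1 with i
    split_ifs <;> simp
  · rw [IsSelfAdjoint, star_eq_conjTranspose, diagonal_conjTranspose]
    congr 1 with i
    by_cases hi : i ∈ s <;> simp [hi]
  · simp [trace_diagonal, hs]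

end IsProjOfRank

section NumericalRadius

variable {m : Type*} [Fintype m] [DecidableEq m] {k : ℕ}

theorem norm_trace_mul_le_sum_norm (A : Matrix m m ℂ) {P : Matrix m m ℂ}
    (hP : IsStarProjection P) : ‖(A * P).trace‖ ≤ ∑ i, ∑ j, ‖A i j‖ := by
  refine (norm_sum_le _ _).trans (Finset.sum_le_sum fun i _ => ?_)
  refine (norm_sum_le _ _).trans (Finset.sum_le_sum fun j _ => ?_)
  rw [norm_mul]
  exact mul_le_of_le_one_right (norm_nonneg _) (norm_apply_le_one_of_isStarProjection hP j i)

theorem bddAbove_norm_trace_mul (k : ℕ) (A : Matrix m m ℂ) :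
    BddAbove {r : ℝ | ∃ P : Matrix m m ℂ, IsProjOfRank P k ∧ r = ‖(A * P).trace‖} := by
  refine ⟨∑ i, ∑ j, ‖A i j‖, ?_⟩
  rintro r ⟨P, hP, rfl⟩
  exact norm_trace_mul_le_sum_norm A hP.isStarProjection

theorem norm_trace_mul_le_wk (A : Matrix m m ℂ) {P : Matrix m m ℂ} (hP : IsProjOfRank P k) :
    ‖(A * P).trace‖ ≤ wk k A :=
  le_csSup (bddAbove_norm_trace_mul k A) ⟨P, hP, rfl⟩

theorem exists_norm_trace_mul_eq_wk (hk : k ≤ Fintype.card m) (A : Matrix m m ℂ) :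
    ∃ P : Matrix m m ℂ, IsProjOfRank P k ∧ ‖(A * P).trace‖ = wk k A := by
  have hcont : Continuous fun P : Matrix m m ℂ => ‖(A * P).trace‖ :=
    (continuous_const.matrix_mul continuous_id).matrix_trace.norm
  obtain ⟨P, hP, hmax⟩ := (isCompact_setOf_isProjOfRank k).exists_isMaxOn
    (exists_isProjOfRank hk) hcont.continuousOn
  refine ⟨P, hP, le_antisymm (norm_trace_mul_le_wk A hP) ?_⟩
  refine Real.sSup_le ?_ (norm_nonneg _)
  rintro r ⟨Q, hQ, rfl⟩
  exact hmax hQ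

theorem wk_nonneg (k : ℕ) (A : Matrix m m ℂ) : 0 ≤ wk k A :=
  Real.sSup_nonneg fun _ ⟨_, _, hr⟩ => hr ▸ norm_nonneg _

theorem trace_add_smul_mul (A B P : Matrix m m ℂ) (μ : ℂ) :
    ((A + μ • B) * P).trace = (A * P).trace + μ * (B * P).trace := by
  rw [add_mul, smul_mul_assoc, trace_add, trace_smul, smul_eq_mul]

theorem norm_trace_add_smul_mul_le (A B P : Matrix m m ℂ) {μ : ℂ} (hμ : ‖μ‖ = 1) :
    ‖((A + μ • B) * P).trace‖ ≤ ‖(A * P).trace‖ + ‖(B * P).trace‖ := by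
  rw [trace_add_smul_mul, ← one_mul ‖(B * P).trace‖, ← hμ, ← norm_mul]
  exact norm_add_le _ _

theorem wk_add_smul_le (A B : Matrix m m ℂ) {μ : ℂ} (hμ : ‖μ‖ = 1) :
    wk k (A + μ • B) ≤ wk k A + wk k B := by
  refine Real.sSup_le ?_ (add_nonneg (wk_nonneg k A) (wk_nonneg k B))
  rintro r ⟨P, hP, rfl⟩
  exact (norm_trace_add_smul_mul_le A B P hμ).trans
    (add_le_add (norm_trace_mul_le_wk A hP) (norm_trace_mul_le_wk B hP))

end NumericalRadius

theorem Complex.exists_norm_eq_one_norm_add_mul (a b : ℂ) :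
    ∃ μ : ℂ, ‖μ‖ = 1 ∧ ‖a + μ * b‖ = ‖a‖ + ‖b‖ := by
  refine ⟨exp ((arg a - arg b : ℝ) * I), norm_exp_ofReal_mul_I _, ?_⟩
  have hrot :
      a + exp ((arg a - arg b : ℝ) * I) * b = (‖a‖ + ‖b‖ : ℝ) * exp (arg a * I) := by
    have hb : exp ((arg a - arg b : ℝ) * I) * b = ‖b‖ * exp (arg a * I) := by
      calc exp ((arg a - arg b : ℝ) * I) * b
          = ‖b‖ * exp ((arg a - arg b : ℝ) * I + arg b * I) := by
            rw [exp_add, mul_left_comm, norm_mul_exp_arg_mul_I]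
        _ = ‖b‖ * exp (arg a * I) := by push_cast; ring_nf
    rw [hb]
    nth_rw 1 [← norm_mul_exp_arg_mul_I a]
    push_cast
    ring
  rw [hrot, norm_mul, norm_exp_ofReal_mul_I, mul_one, Complex.norm_real,
    Real.norm_of_nonneg (by positivity)]

theorem parallelWk_iff {m : Type*} [Fintype m] [DecidableEq m] {k : ℕ}
    (hk : k ≤ Fintype.card m) (A B : Matrix m m ℂ) :
    ParallelWk k A B ↔ ∃ P : Matrix m m ℂ, IsProjOfRank P k ∧
      ‖(A * P).trace‖ = wk k A ∧ ‖(B * P).trace‖ = wk k B := by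
  constructor
  · rintro ⟨μ, hμ, hpar⟩
    obtain ⟨P, hP, hmax⟩ := exists_norm_trace_mul_eq_wk hk (A + μ • B)
    have hA := norm_trace_mul_le_wk A hP
    have hB := norm_trace_mul_le_wk B hP
    have hsum : wk k A + wk k B ≤ ‖(A * P).trace‖ + ‖(B * P).trace‖ := by
      rw [← hpar, ← hmax]
      exact norm_trace_add_smul_mul_le A B P hμ
    exact ⟨P, hP, by linarith, by linarith⟩
  · rintro ⟨P, hP, hA, hB⟩
    obtain ⟨μ, hμ, hnorm⟩ :=
      Complex.exists_norm_eq_one_norm_add_mul (A * P).trace (B * P).trace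
    refine ⟨μ, hμ, le_antisymm (wk_add_smul_le A B hμ) ?_⟩
    calc wk k A + wk k B = ‖((A + μ • B) * P).trace‖ := by
          rw [trace_add_smul_mul, hnorm, hA, hB]
      _ ≤ wk k (A + μ • B) := norm_trace_mul_le_wk _ hP

theorem stmt_4_general (n k : ℕ) (hkn : k < n) (A B : Matrix (Fin n) (Fin n) ℂ) :
    ParallelWk k A B ↔
      ∃ P : Matrix (Fin n) (Fin n) ℂ, IsProjOfRank P k ∧
        ‖(A * P).trace‖ = wk k A ∧ ‖(B * P).trace‖ = wk k B :=
  parallelWk_iff (by simpa using hkn.le) A B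

/-- `A ∥ B` iff there is a rank-`k` orthogonal projection `P` with
`|tr(AP)| = w_k(A)` and `|tr(BP)| = w_k(B)`. -/
theorem stmt_4 (n k : ℕ) (hk : 1 ≤ k) (hkn : k < n) (A B : Matrix (Fin n) (Fin n) ℂ) :
    ParallelWk k A B ↔
      ∃ P : Matrix (Fin n) (Fin n) ℂ, IsProjOfRank P k ∧
        ‖(A * P).trace‖ = wk k A ∧ ‖(B * P).trace‖ = wk k B :=
  stmt_4_general n k hkn A B
end
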